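/- Assume the leading coefficients c_{j, m_j − 1} are nonzero for every j = 1, …, n. Then for every k_0 ∈ ℕ, every N ≥ M, and every z ∈ ℂ, the complex number z is a generalized eigenvalue of the matrix pencil, i.e. det((H_{N,M}^{k_0})^* (H_{N,M}^{k_0+1} − z · H_{N,M}^{k_0})) = 0, if and only if z ∈ {z_1, …, z_n}; moreover, each z_j is a root of the polynomial z ↦ det((H_{N,M}^{k_0})^* (H_{N,M}^{k_0+1} − z · H_{N,M}^{k_0})) of multiplicity exactly m_j. -/

import Mathlib

open Polynomial Finset Matrix

/-- The monomial-exponential sum `h(k) = ∑ j ∑ s, c j s * k ^ s * z j ^ k`. -/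
noncomputable def hmes {n : ℕ} (z : Fin n → ℂ) (m : Fin n → ℕ)
    (c : (j : Fin n) → Fin (m j) → ℂ) (k : ℕ) : ℂ :=
  ∑ j, ∑ s : Fin (m j), c j s * (k : ℂ) ^ (s : ℕ) * z j ^ k

/-- The `N × M'` Hankel matrix with entries `h (k0 + i + l)`. -/
def hankel (h : ℕ → ℂ) (k0 N M' : ℕ) : Matrix (Fin N) (Fin M') ℂ :=
  Matrix.of fun i l => h (k0 + (i : ℕ) + (l : ℕ))

/-- The polynomial `w ↦ det(Aᴴ * B - w • Aᴴ * A)`, i.e. the determinant of the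
matrix of polynomials with entries `(Aᴴ * B) i l - X * (Aᴴ * A) i l`. -/
noncomputable def pencilPoly {N M : ℕ} (A B : Matrix (Fin N) (Fin M) ℂ) :
    Polynomial ℂ :=
  (Matrix.of fun i l : Fin M =>
    C ((Aᴴ * B) i l) - X * C ((Aᴴ * A) i l)).det

/-!
The sequence `h` satisfies the linear recurrence whose characteristic polynomial is the Prony
polynomial `P = ∏ j, (X - z j) ^ m j` of degree `M`, i.e. `P(S) h = 0` for the shift `S`.
Hence `H^{k0+1} = H^{k0} C` with `C` the companion matrix of `P`, and
`det((H^{k0})ᴴ (H^{k0+1} - w H^{k0})) = (-1)^M det((H^{k0})ᴴ H^{k0}) P(w)`.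
It remains to see that `H^{k0}` has trivial kernel. A kernel vector `v` is the coefficient vector
of some `q` of degree `< M` such that `q(S) h` vanishes at `N ≥ M` consecutive indices; as
`P(S)` annihilates `q(S) h` and `P(0) ≠ 0`, the recurrence runs both ways and `q(S) h = 0`.
Since the leading coefficients `c j (m j - 1)` are nonzero, `P` is the minimal annihilator of `h`,
so `P ∣ q` and `q = 0`.
-/

namespace Matrix

variable {R : Type*} [CommRing R]

def companion {M : ℕ} (a : Fin M → R) : Matrix (Fin M) (Fin M) R :=
  of fun i l => (if (l : ℕ) + 1 = M then -a i else 0) + if (i : ℕ) = l + 1 then 1 else 0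

theorem det_companion_sub_smul_one {M : ℕ} (a : Fin M → R) (b : R) :
    (companion a - b • 1).det = (-1) ^ M * (b ^ M + ∑ l, a l * b ^ (l : ℕ)) := by
  induction M with
  | zero => simp
  | succ M ih =>
    -- Expand along row 0, whose only nonzero entries are `-b` at `0` and `-a 0` at `Fin.last M`:
    -- the first minor is the companion matrix of `a ∘ Fin.succ`, the last one is unitriangular.
    set A := companion a - b • (1 : Matrix (Fin (M + 1)) (Fin (M + 1)) R)
    have hrow (l : Fin (M + 1)) :
        A 0 l = (if l = Fin.last M then -a 0 else 0) - if l = 0 then b else 0 := by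
      simp only [A, companion, sub_apply, of_apply, smul_apply, one_apply, Fin.ext_iff,
        Fin.val_zero, Fin.val_last, smul_eq_mul]
      split_ifs <;> first | contradiction | (exfalso; omega) | ring1
    have hminor0 :
        A.submatrix Fin.succ (Fin.succAbove 0) = companion (a ∘ Fin.succ) - b • 1 := by
      ext i l
      simp [A, companion, Fin.ext_iff, one_apply]
    have hminorLast : (A.submatrix Fin.succ (Fin.last M).succAbove).det = 1 := by
      rw [det_of_isUpperTriangular]
      · refine prod_eq_one fun i _ => ?_
        simp [A, companion, Fin.ext_iff]
        omega
      · intro i l (hil : (l : ℕ) < i)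
        simp [A, companion, Fin.ext_iff, one_apply]
        split_ifs <;> first | (exfalso; omega) | simp
    rw [det_succ_row_zero]
    simp only [hrow, mul_sub, sub_mul, sum_sub_distrib, mul_ite, ite_mul, mul_zero, zero_mul,
      sum_ite_eq', mem_univ, if_true, hminor0, hminorLast, ih]
    have hsum : ∑ l : Fin M, a l.succ * b ^ ((l : ℕ) + 1) =
        b * ∑ l : Fin M, a l.succ * b ^ (l : ℕ) := by
      rw [mul_sum]
      exact sum_congr rfl fun _ _ => by ring
    rw [Fin.sum_univ_succ]
    simp only [Fin.val_last, Fin.val_zero, Fin.val_succ, Function.comp_apply, hsum]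
    ring

open scoped ComplexOrder in
theorem det_conjTranspose_mul_self_ne_zero {K ι κ : Type*} [RCLike K] [Fintype ι] [Fintype κ]
    [DecidableEq κ] {A : Matrix ι κ K} (hA : ∀ v, A *ᵥ v = 0 → v = 0) :
    (Aᴴ * A).det ≠ 0 := by
  rw [Ne, ← exists_mulVec_eq_zero_iff]
  rintro ⟨v, hv, hAv⟩
  exact hv (hA v ((conjTranspose_mul_self_mulVec_eq_zero A v).1 hAv))

end Matrix

section Shift

variable {R : Type*} [CommRing R]

variable (R) in
def seqShift : Module.End R (ℕ → R) where
  toFun f k := f (k + 1)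
  map_add' _ _ := rfl
  map_smul' _ _ := rfl

@[simp]
theorem seqShift_apply (f : ℕ → R) (k : ℕ) : seqShift R f k = f (k + 1) := rfl

theorem seqShift_pow_apply (l : ℕ) (f : ℕ → R) (k : ℕ) :
    (seqShift R ^ l) f k = f (k + l) := by
  induction l generalizing f with
  | zero => rfl
  | succ l ih => rw [pow_succ, Module.End.mul_apply, ih]; rfl

theorem aeval_seqShift_apply (p : R[X]) (f : ℕ → R) (k : ℕ) :
    aeval (seqShift R) p f k = ∑ l ∈ range (p.natDegree + 1), p.coeff l * f (k + l) := by
  simp [aeval_eq_sum_range, seqShift_pow_apply]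

theorem aeval_seqShift_mul_apply (p q : R[X]) (f : ℕ → R) :
    aeval (seqShift R) (p * q) f = aeval (seqShift R) p (aeval (seqShift R) q f) := by
  rw [map_mul, Module.End.mul_apply]

theorem aeval_seqShift_apply_add_natDegree {p : R[X]} (hp : p.Monic) {f : ℕ → R}
    (hf : aeval (seqShift R) p f = 0) (k : ℕ) :
    f (k + p.natDegree) = -∑ l ∈ range p.natDegree, p.coeff l * f (k + l) := by
  have h := congrFun hf k
  rw [aeval_seqShift_apply, sum_range_succ, hp.coeff_natDegree, Pi.zero_apply] at h
  linear_combination h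

theorem forall_add_eq_zero_of_aeval_seqShift {p : R[X]} (hp : p.Monic) {f : ℕ → R}
    (hf : aeval (seqShift R) p f = 0) {k0 N : ℕ} (hN : p.natDegree ≤ N)
    (hwin : ∀ t < N, f (k0 + t) = 0) (t : ℕ) : f (k0 + t) = 0 := by
  induction t using Nat.strong_induction_on with
  | _ t ih =>
    rcases lt_or_ge t N with htN | htN
    · exact hwin t htN
    · have h := aeval_seqShift_apply_add_natDegree hp hf (k0 + (t - p.natDegree))
      rw [show k0 + (t - p.natDegree) + p.natDegree = k0 + t by omega] at h
      rw [h, neg_eq_zero]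
      refine sum_eq_zero fun l hl => ?_
      rw [add_assoc, ih _ (by simp at hl; omega), mul_zero]

theorem eq_zero_of_forall_add_eq_zero_of_aeval_seqShift [NoZeroDivisors R] {p : R[X]}
    (hp0 : p.coeff 0 ≠ 0) {f : ℕ → R} (hf : aeval (seqShift R) p f = 0) {k0 : ℕ}
    (hk0 : ∀ t, f (k0 + t) = 0) : f = 0 := by
  induction k0 with
  | zero => funext k; simpa using hk0 k
  | succ k0 ih =>
    refine ih fun t => ?_
    rcases t with _ | t
    · have h := congrFun hf k0
      rw [aeval_seqShift_apply, sum_range_succ'] at h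
      simp only [add_zero, Pi.zero_apply] at h
      rw [sum_eq_zero fun l _ => by rw [show k0 + (l + 1) = k0 + 1 + l by omega, hk0, mul_zero],
        zero_add] at h
      exact (mul_eq_zero.mp h).resolve_left hp0
    · rw [show k0 + (t + 1) = k0 + 1 + t by omega]
      exact hk0 t

def expMonomial (z : R) (s : ℕ) : ℕ → R := fun k => (k : R) ^ s * z ^ k

theorem aeval_seqShift_expMonomial_zero (p : R[X]) (z : R) :
    aeval (seqShift R) p (expMonomial z 0) = p.eval z • expMonomial z 0 :=
  Module.End.aeval_apply_of_mem_apply_eq_smul <| funext fun k => by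
    simp [expMonomial, pow_succ, mul_comm]

theorem aeval_seqShift_X_sub_C_expMonomial (z : R) (s : ℕ) :
    aeval (seqShift R) (X - C z) (expMonomial z s) =
      z • ∑ i ∈ range s, (s.choose i : R) • expMonomial z i := by
  funext k
  have hbinom :
      ((k : R) + 1) ^ s - (k : R) ^ s = ∑ i ∈ range s, (k : R) ^ i * (s.choose i : R) := by
    rw [add_pow, sum_range_succ]
    simp
  simp only [map_sub, aeval_X, aeval_C, LinearMap.sub_apply, Module.algebraMap_end_apply,
    Pi.sub_apply, Pi.smul_apply, Finset.sum_apply, smul_eq_mul, expMonomial, seqShift_apply]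
  push_cast
  calc ((k : R) + 1) ^ s * z ^ (k + 1) - z * ((k : R) ^ s * z ^ k)
      = (((k : R) + 1) ^ s - (k : R) ^ s) * z ^ k * z := by ring
    _ = _ := by rw [hbinom, sum_mul, sum_mul, mul_sum]; exact sum_congr rfl fun _ _ => by ring

theorem aeval_seqShift_X_sub_C_pow_expMonomial_of_lt (z : R) {s t : ℕ} (hst : s < t) :
    aeval (seqShift R) ((X - C z) ^ t) (expMonomial z s) = 0 := by
  induction s using Nat.strong_induction_on generalizing t with
  | _ s ih =>
    obtain ⟨t, rfl⟩ : ∃ t', t = t' + 1 := ⟨t - 1, by omega⟩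
    rw [pow_succ, aeval_seqShift_mul_apply, aeval_seqShift_X_sub_C_expMonomial, map_smul,
      map_sum, sum_eq_zero fun i hi => by
        rw [map_smul, ih i (mem_range.mp hi) (by simp at hi; omega), smul_zero], smul_zero]

theorem aeval_seqShift_X_sub_C_pow_expMonomial_self (z : R) (s : ℕ) :
    aeval (seqShift R) ((X - C z) ^ s) (expMonomial z s) =
      (s.factorial * z ^ s : R) • expMonomial z 0 := by
  induction s with
  | zero => simp
  | succ s ih =>
    rw [pow_succ, aeval_seqShift_mul_apply, aeval_seqShift_X_sub_C_expMonomial, map_smul,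
      map_sum, sum_range_succ, sum_eq_zero fun i hi => by
        rw [map_smul, aeval_seqShift_X_sub_C_pow_expMonomial_of_lt z (mem_range.mp hi), smul_zero],
      zero_add, map_smul, ih, Nat.choose_succ_self_right, smul_smul, smul_smul]
    push_cast [Nat.factorial_succ]
    congr 1
    ring

theorem aeval_seqShift_expMonomial_of_dvd {z : R} {s t : ℕ} (hst : s < t) {p : R[X]}
    (hp : (X - C z) ^ t ∣ p) : aeval (seqShift R) p (expMonomial z s) = 0 := by
  obtain ⟨q, rfl⟩ := hp
  rw [mul_comm, aeval_seqShift_mul_apply, aeval_seqShift_X_sub_C_pow_expMonomial_of_lt z hst,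
    map_zero]

end Shift

section Prony

variable {R : Type*} [CommRing R] {n : ℕ}

noncomputable def pronyPoly (z : Fin n → R) (m : Fin n → ℕ) : R[X] :=
  ∏ i, (X - C (z i)) ^ m i

theorem pronyPoly_monic (z : Fin n → R) (m : Fin n → ℕ) : (pronyPoly z m).Monic :=
  monic_prod_of_monic _ _ fun _ _ => (monic_X_sub_C _).pow _

theorem natDegree_pronyPoly [Nontrivial R] (z : Fin n → R) (m : Fin n → ℕ) :
    (pronyPoly z m).natDegree = ∑ i, m i := by
  rw [pronyPoly, natDegree_prod_of_monic _ _ fun _ _ => (monic_X_sub_C _).pow _]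
  simp [(monic_X_sub_C _).natDegree_pow]

theorem pronyPoly_eq_mul_erase (z : Fin n → R) (m : Fin n → ℕ) (j : Fin n) :
    pronyPoly z m = (∏ i ∈ univ.erase j, (X - C (z i)) ^ m i) * (X - C (z j)) ^ m j :=
  (prod_erase_mul _ _ (mem_univ j)).symm

variable [IsDomain R] {z : Fin n → R} {m : Fin n → ℕ}

theorem eval_prod_erase_ne_zero (hz : Function.Injective z) (j : Fin n) :
    (∏ i ∈ univ.erase j, (X - C (z i)) ^ m i).eval (z j) ≠ 0 := by
  rw [eval_prod, prod_ne_zero_iff]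
  intro i hi
  simpa using pow_ne_zero (m i) (sub_ne_zero.mpr (hz.ne (ne_of_mem_erase hi).symm))

theorem coeff_zero_pronyPoly_ne_zero (hz0 : ∀ j, z j ≠ 0) : (pronyPoly z m).coeff 0 ≠ 0 := by
  rw [coeff_zero_eq_eval_zero, pronyPoly, eval_prod, prod_ne_zero_iff]
  intro i _
  simpa using pow_ne_zero (m i) (hz0 i)

theorem eval_pronyPoly_eq_zero_iff (hm : ∀ j, 0 < m j) (w : R) :
    (pronyPoly z m).eval w = 0 ↔ ∃ j, w = z j := by
  simp [pronyPoly, eval_prod, prod_eq_zero_iff, sub_eq_zero, (hm _).ne']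

theorem rootMultiplicity_pronyPoly (hz : Function.Injective z) (j : Fin n) :
    (pronyPoly z m).rootMultiplicity (z j) = m j := by
  have hne := eval_prod_erase_ne_zero (m := m) hz j
  rw [pronyPoly_eq_mul_erase,
    rootMultiplicity_mul_X_sub_C_pow (fun h => hne (by rw [h, eval_zero])),
    rootMultiplicity_eq_zero hne, zero_add]

end Prony

section Hankel

theorem hankel_mulVec_apply (h : ℕ → ℂ) (k0 N M : ℕ) (v : Fin M → ℂ) (i : Fin N) :
    (hankel h k0 N M *ᵥ v) i = aeval (seqShift ℂ) (ofFn M v) h (k0 + i) := by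
  rw [ofFn_eq_sum_monomial, map_sum]
  simp [mulVec, dotProduct, hankel, aeval_monomial, seqShift_pow_apply, add_assoc, mul_comm]

theorem hankel_succ_eq_mul_companion {h : ℕ → ℂ} {p : ℂ[X]} {M : ℕ} (hp : p.Monic)
    (hM : p.natDegree = M) (hf : aeval (seqShift ℂ) p h = 0) (k0 N : ℕ) :
    hankel h (k0 + 1) N M = hankel h k0 N M * companion (fun l : Fin M => p.coeff l) := by
  ext i l
  rw [mul_apply]
  by_cases hl : (l : ℕ) + 1 = M
  · have hcol (t : Fin M) : companion (fun l : Fin M => p.coeff l) t l = -p.coeff t := by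
      simp [companion, hl, t.isLt.ne]
    have hrec := aeval_seqShift_apply_add_natDegree hp hf (k0 + i)
    rw [hM, ← Fin.sum_univ_eq_sum_range (fun t => p.coeff t * h (k0 + i + t))] at hrec
    simp only [hcol, hankel, of_apply, mul_neg, sum_neg_distrib]
    rw [show k0 + 1 + i + l = k0 + i + M by omega, hrec]
    simp only [mul_comm]
  · have hl' : (l : ℕ) + 1 < M := by omega
    have hcol (t : Fin M) :
        companion (fun l : Fin M => p.coeff l) t l = if t = ⟨l + 1, hl'⟩ then 1 else 0 := by
      simp [companion, hl, Fin.ext_iff]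
    simp only [hcol, mul_ite, mul_one, mul_zero, sum_ite_eq', mem_univ, if_true, hankel, of_apply]
    congr 1
    omega

theorem pencilPoly_eval {N M : ℕ} (A B : Matrix (Fin N) (Fin M) ℂ) (w : ℂ) :
    (pencilPoly A B).eval w = (Aᴴ * (B - w • A)).det := by
  rw [pencilPoly, ← coe_evalRingHom, RingHom.map_det]
  congr 1
  ext i l
  simp only [RingHom.mapMatrix_apply, map_apply, of_apply, coe_evalRingHom, eval_sub, eval_mul,
    eval_C, eval_X, Matrix.mul_sub, Matrix.mul_smul, Matrix.sub_apply, Matrix.smul_apply,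
    smul_eq_mul]

theorem pencilPoly_hankel_of_aeval_eq_zero {h : ℕ → ℂ} {p : ℂ[X]} {M : ℕ} (hp : p.Monic)
    (hM : p.natDegree = M) (hf : aeval (seqShift ℂ) p h = 0) (k0 N : ℕ) :
    pencilPoly (hankel h k0 N M) (hankel h (k0 + 1) N M) =
      C ((-1) ^ M * ((hankel h k0 N M)ᴴ * hankel h k0 N M).det) * p := by
  refine Polynomial.funext fun w => ?_
  have hpw : p.eval w = w ^ M + ∑ l : Fin M, p.coeff l * w ^ (l : ℕ) := by
    rw [eval_eq_sum_range, hM, sum_range_succ, ← hM, hp.coeff_natDegree, hM, one_mul, add_comm,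
      Fin.sum_univ_eq_sum_range (fun l => p.coeff l * w ^ l)]
  have hsub (A : Matrix (Fin N) (Fin M) ℂ) (B : Matrix (Fin M) (Fin M) ℂ) :
      A * B - w • A = A * (B - w • 1) := by
    rw [Matrix.mul_sub, Matrix.mul_smul, Matrix.mul_one]
  rw [pencilPoly_eval, hankel_succ_eq_mul_companion hp hM hf, hsub, ← Matrix.mul_assoc, det_mul,
    det_companion_sub_smul_one, eval_mul, eval_C, hpw]
  ring

end Hankel

section Hmes

variable {n : ℕ} {z : Fin n → ℂ} {m : Fin n → ℕ} {c : (j : Fin n) → Fin (m j) → ℂ}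

theorem hmes_eq_sum_smul_expMonomial :
    hmes z m c = ∑ j, ∑ s : Fin (m j), c j s • expMonomial (z j) s := by
  funext k
  simp [hmes, expMonomial, mul_assoc]

variable (z m c) in
theorem aeval_pronyPoly_hmes :
    aeval (seqShift ℂ) (pronyPoly z m) (hmes z m c) = 0 := by
  rw [hmes_eq_sum_smul_expMonomial, map_sum]
  refine sum_eq_zero fun j _ => ?_
  rw [map_sum]
  refine sum_eq_zero fun s _ => ?_
  have hdvd : (X - C (z j)) ^ m j ∣ pronyPoly z m := dvd_prod_of_mem _ (mem_univ j)
  rw [map_smul, aeval_seqShift_expMonomial_of_dvd s.isLt hdvd, smul_zero]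

-- The operator kills every term of `hmes z m c` except the top one at `z j`, which it sends to a
-- multiple of the geometric sequence `z j ^ k`.
theorem aeval_prod_erase_mul_X_sub_C_pow_hmes (hm : ∀ j, 1 ≤ m j) (j : Fin n) :
    aeval (seqShift ℂ)
        ((∏ i ∈ univ.erase j, (X - C (z i)) ^ m i) * (X - C (z j)) ^ (m j - 1)) (hmes z m c) =
      (c j ⟨m j - 1, Nat.sub_lt (hm j) one_pos⟩ * ((m j - 1).factorial * z j ^ (m j - 1)) *
        (∏ i ∈ univ.erase j, (X - C (z i)) ^ m i).eval (z j)) • expMonomial (z j) 0 := by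
  rw [hmes_eq_sum_smul_expMonomial, map_sum, sum_eq_single j]
  · rw [map_sum, sum_eq_single ⟨m j - 1, Nat.sub_lt (hm j) one_pos⟩]
    · rw [map_smul, aeval_seqShift_mul_apply, aeval_seqShift_X_sub_C_pow_expMonomial_self,
        map_smul, aeval_seqShift_expMonomial_zero, smul_smul, smul_smul]
    · intro s _ hs
      have hs : (s : ℕ) < m j - 1 := by
        have : (s : ℕ) ≠ m j - 1 := Fin.val_ne_of_ne hs
        omega
      rw [map_smul, aeval_seqShift_expMonomial_of_dvd hs (dvd_mul_left _ _), smul_zero]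
    · simp
  · intro i _ hij
    rw [map_sum]
    refine sum_eq_zero fun s _ => ?_
    have hdvd : (X - C (z i)) ^ m i ∣
        (∏ i ∈ univ.erase j, (X - C (z i)) ^ m i) * (X - C (z j)) ^ (m j - 1) :=
      (dvd_prod_of_mem _ (mem_erase.mpr ⟨hij, mem_univ i⟩)).mul_right _
    rw [map_smul, aeval_seqShift_expMonomial_of_dvd s.isLt hdvd, smul_zero]
  · simp

theorem X_sub_C_pow_dvd_of_aeval_hmes_eq_zero (hz : Function.Injective z)
    (hz0 : ∀ j, z j ≠ 0) (hm : ∀ j, 1 ≤ m j)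
    (hc : ∀ j, c j ⟨m j - 1, Nat.sub_lt (hm j) one_pos⟩ ≠ 0) {q : ℂ[X]}
    (hq : aeval (seqShift ℂ) q (hmes z m c) = 0) (j : Fin n) :
    (X - C (z j)) ^ m j ∣ q := by
  -- If `z j` had multiplicity `r < m j` in `q = (X - z j) ^ r * q₁`, then the multiple
  -- `q₁ * ∏_{i ≠ j} (X - z i) ^ m i * (X - z j) ^ (m j - 1)` of `q` would send
  -- `hmes z m c` to a nonzero multiple of `q₁.eval (z j) • (z j ^ k)`.
  rcases eq_or_ne q 0 with rfl | hq0
  · exact dvd_zero _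
  rw [← le_rootMultiplicity_iff hq0]
  by_contra! hlt
  obtain ⟨q₁, hq₁, hndvd⟩ := exists_eq_pow_rootMultiplicity_mul_and_not_dvd q hq0 (z j)
  set r := q.rootMultiplicity (z j)
  set Q := ∏ i ∈ univ.erase j, (X - C (z i)) ^ m i
  have hfactor :
      q₁ * (Q * (X - C (z j)) ^ (m j - 1)) = Q * (X - C (z j)) ^ (m j - 1 - r) * q := by
    rw [hq₁, ← pow_mul_pow_sub _ (show r ≤ m j - 1 by omega)]
    ring
  have hzero := congrArg (fun p => aeval (seqShift ℂ) p (hmes z m c)) hfactor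
  rw [aeval_seqShift_mul_apply, aeval_seqShift_mul_apply _ q, hq, map_zero,
    aeval_prod_erase_mul_X_sub_C_pow_hmes hm, map_smul, aeval_seqShift_expMonomial_zero,
    smul_smul] at hzero
  have h0 := congrFun hzero 0
  simp only [expMonomial, Pi.smul_apply, Pi.zero_apply, smul_eq_mul, pow_zero, mul_one] at h0
  refine mul_ne_zero (mul_ne_zero (mul_ne_zero (hc j) (mul_ne_zero ?_ (pow_ne_zero _ (hz0 j))))
    (eval_prod_erase_ne_zero hz j)) (fun h => hndvd (dvd_iff_isRoot.mpr h)) h0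
  exact_mod_cast (m j - 1).factorial_ne_zero

theorem pronyPoly_dvd_of_aeval_hmes_eq_zero (hz : Function.Injective z)
    (hz0 : ∀ j, z j ≠ 0) (hm : ∀ j, 1 ≤ m j)
    (hc : ∀ j, c j ⟨m j - 1, Nat.sub_lt (hm j) one_pos⟩ ≠ 0) {q : ℂ[X]}
    (hq : aeval (seqShift ℂ) q (hmes z m c) = 0) : pronyPoly z m ∣ q :=
  Fintype.prod_dvd_of_coprime ((pairwise_coprime_X_sub_C hz).mono fun _ _ h => h.pow)
    (X_sub_C_pow_dvd_of_aeval_hmes_eq_zero hz hz0 hm hc hq)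

theorem hankel_hmes_mulVec_eq_zero (hz : Function.Injective z)
    (hz0 : ∀ j, z j ≠ 0) (hm : ∀ j, 1 ≤ m j)
    (hc : ∀ j, c j ⟨m j - 1, Nat.sub_lt (hm j) one_pos⟩ ≠ 0) {M N : ℕ}
    (hM : M = ∑ j, m j) (hN : M ≤ N) (k0 : ℕ) {v : Fin M → ℂ}
    (hv : hankel (hmes z m c) k0 N M *ᵥ v = 0) : v = 0 := by
  set g := aeval (seqShift ℂ) (ofFn M v) (hmes z m c)
  have hg : aeval (seqShift ℂ) (pronyPoly z m) g = 0 := by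
    rw [← aeval_seqShift_mul_apply, mul_comm, aeval_seqShift_mul_apply, aeval_pronyPoly_hmes,
      map_zero]
  have hwin : ∀ t < N, g (k0 + t) = 0 := fun t ht => by
    simpa [hv] using (hankel_mulVec_apply (hmes z m c) k0 N M v ⟨t, ht⟩).symm
  have hg0 : g = 0 :=
    eq_zero_of_forall_add_eq_zero_of_aeval_seqShift (coeff_zero_pronyPoly_ne_zero hz0) hg
      (forall_add_eq_zero_of_aeval_seqShift (pronyPoly_monic z m) hg
        (by rw [natDegree_pronyPoly, ← hM]; exact hN) hwin)
  have hq : ofFn M v = 0 := by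
    by_contra hq0
    have hle := degree_le_of_dvd (pronyPoly_dvd_of_aeval_hmes_eq_zero hz hz0 hm hc hg0) hq0
    rw [degree_eq_natDegree (pronyPoly_monic z m).ne_zero, natDegree_pronyPoly, ← hM] at hle
    exact (ofFn_degree_lt v).not_ge hle
  exact injective_ofFn M (by rw [hq, map_zero])

end Hmes

theorem hankel_pencil_eigenvalues_general (n : ℕ) (z : Fin n → ℂ)
    (hz : Function.Injective z) (hz0 : ∀ j, z j ≠ 0)
    (m : Fin n → ℕ) (hm : ∀ j, 1 ≤ m j) (M : ℕ) (hM : M = ∑ j, m j)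
    (c : (j : Fin n) → Fin (m j) → ℂ)
    (hc : ∀ j, c j ⟨m j - 1, Nat.sub_lt (hm j) one_pos⟩ ≠ 0)
    (k0 N : ℕ) (hN : M ≤ N) :
    (∀ w : ℂ,
      ((hankel (hmes z m c) k0 N M)ᴴ *
          (hankel (hmes z m c) (k0 + 1) N M -
            w • hankel (hmes z m c) k0 N M)).det = 0 ↔ ∃ j, w = z j) ∧
    (∀ w : ℂ,
      (pencilPoly (hankel (hmes z m c) k0 N M)
          (hankel (hmes z m c) (k0 + 1) N M)).eval w =
        ((hankel (hmes z m c) k0 N M)ᴴ *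
          (hankel (hmes z m c) (k0 + 1) N M -
            w • hankel (hmes z m c) k0 N M)).det) ∧
    (∀ j : Fin n,
      (pencilPoly (hankel (hmes z m c) k0 N M)
          (hankel (hmes z m c) (k0 + 1) N M)).rootMultiplicity (z j) = m j) := by
  set A := hankel (hmes z m c) k0 N M
  have hpencil := pencilPoly_hankel_of_aeval_eq_zero (pronyPoly_monic z m)
    ((natDegree_pronyPoly z m).trans hM.symm) (aeval_pronyPoly_hmes z m c) k0 N
  have hκ : (-1) ^ M * (Aᴴ * A).det ≠ 0 :=
    mul_ne_zero (pow_ne_zero _ (neg_ne_zero.mpr one_ne_zero)) <|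
      det_conjTranspose_mul_self_ne_zero fun _ =>
        hankel_hmes_mulVec_eq_zero hz hz0 hm hc hM hN k0
  refine ⟨fun w => ?_, pencilPoly_eval _ _, fun j => ?_⟩
  · rw [← pencilPoly_eval, hpencil, eval_mul, eval_C, mul_eq_zero, or_iff_right hκ,
      eval_pronyPoly_eq_zero_iff hm]
  · have hne : C ((-1) ^ M * (Aᴴ * A).det) * pronyPoly z m ≠ 0 :=
      mul_ne_zero (C_ne_zero.mpr hκ) (pronyPoly_monic z m).ne_zero
    rw [hpencil, rootMultiplicity_mul hne, rootMultiplicity_C, zero_add,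
      rootMultiplicity_pronyPoly hz]

/-- if all leading coefficients `c j (m j - 1)` are nonzero, then
`w` is a generalized eigenvalue of the pencil, i.e.
`det((H_{N,M}^{k0})ᴴ (H_{N,M}^{k0+1} - w • H_{N,M}^{k0})) = 0`, iff
`w ∈ {z 1, …, z n}`; moreover each `z j` is a root of the corresponding
polynomial of multiplicity exactly `m j`. -/
theorem hankel_pencil_eigenvalues (n : ℕ) (hn : 1 ≤ n) (z : Fin n → ℂ)
    (hz : Function.Injective z) (hz0 : ∀ j, z j ≠ 0)
    (m : Fin n → ℕ) (hm : ∀ j, 1 ≤ m j) (M : ℕ) (hM : M = ∑ j, m j)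
    (c : (j : Fin n) → Fin (m j) → ℂ)
    (hc : ∀ j, c j ⟨m j - 1, Nat.sub_lt (hm j) one_pos⟩ ≠ 0)
    (k0 N : ℕ) (hN : M ≤ N) :
    (∀ w : ℂ,
      ((hankel (hmes z m c) k0 N M)ᴴ *
          (hankel (hmes z m c) (k0 + 1) N M -
            w • hankel (hmes z m c) k0 N M)).det = 0 ↔ ∃ j, w = z j) ∧
    (∀ w : ℂ,
      (pencilPoly (hankel (hmes z m c) k0 N M)
          (hankel (hmes z m c) (k0 + 1) N M)).eval w =
        ((hankel (hmes z m c) k0 N M)ᴴ *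
          (hankel (hmes z m c) (k0 + 1) N M -
            w • hankel (hmes z m c) k0 N M)).det) ∧
    (∀ j : Fin n,
      (pencilPoly (hankel (hmes z m c) k0 N M)
          (hankel (hmes z m c) (k0 + 1) N M)).rootMultiplicity (z j) = m j) :=
  hankel_pencil_eigenvalues_general n z hz hz0 m hm M hM c hc k0 N hN
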